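/- arXiv:2205.06343 — 4 statements merged into one kernel-verified Lean document; each statement's English description precedes it below -/
import Mathlib

section
/- For positive integers m ≤ n, the sum over k from 1 to m of (n-k)!/((m-k)!·k) equals (n!/m!)·(H_n − H_{n−m}), where H_j denotes the j-th harmonic number (with H_0 = 0). -/
open Finset

private lemma choose_sum_aux (m n : ℕ) (h : m + 1 ≤ n) :
    ∑ k ∈ Finset.Icc 1 (m + 1), (n - k).choose (n - m - 1) = n.choose (n - m) := by
  have : ∑ k ∈ Finset.Icc 1 (m + 1), (n - k).choose (n - m - 1)
      = ∑ i ∈ Finset.Icc (n - m - 1) (n - 1), i.choose (n - m - 1) := by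
    apply Finset.sum_nbij' (fun k => n - k) (fun i => n - i)
    · intro a ha; simp only [Finset.mem_Icc] at ha ⊢; omega
    · intro a ha; simp only [Finset.mem_Icc] at ha ⊢; omega
    · intro a ha; simp only [Finset.mem_Icc] at ha; omega
    · intro a ha; simp only [Finset.mem_Icc] at ha; omega
    · intro a ha; rfl
  rw [this, Nat.sum_Icc_choose]
  congr 1 <;> omega

private lemma factorial_sum_aux (m n : ℕ) (h : m + 1 ≤ n) :
    ∑ k ∈ Finset.Icc 1 (m + 1), ((n - k).factorial : ℝ) / (m + 1 - k).factorial
      = (n.factorial : ℝ) / (m.factorial * ((n - m : ℕ) : ℝ)) := by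
  have key : ∀ k ∈ Finset.Icc 1 (m + 1),
      ((n - k).factorial : ℝ) / (m + 1 - k).factorial
        = ((n - k).choose (n - m - 1) : ℝ) * (n - m - 1).factorial := by
    intro k hk
    simp only [Finset.mem_Icc] at hk
    have h1 : n - m - 1 ≤ n - k := by omega
    have h2 : (n - k) - (n - m - 1) = m + 1 - k := by omega
    have h3 := Nat.choose_mul_factorial_mul_factorial h1
    rw [h2] at h3
    have hfk : ((m + 1 - k).factorial : ℝ) ≠ 0 := by positivity
    rw [div_eq_iff hfk, ← h3]
    push_cast
    ring
  rw [Finset.sum_congr rfl key, ← Finset.sum_mul, ← Nat.cast_sum,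
    choose_sum_aux m n h]
  have h1 : n - m ≤ n := by omega
  have h2 : n - (n - m) = m := by omega
  have h3 := Nat.choose_mul_factorial_mul_factorial h1
  rw [h2] at h3
  have h4 : (n - m).factorial = (n - m) * (n - m - 1).factorial := by
    have e : n - m = (n - m - 1) + 1 := by omega
    rw [e, Nat.factorial_succ, ← e]
  have hden : (m.factorial : ℝ) * ((n - m : ℕ) : ℝ) ≠ 0 := by
    have h5 : 0 < n - m := by omega
    have h6 : (0 : ℝ) < ((n - m : ℕ) : ℝ) := by exact_mod_cast h5
    positivity
  rw [eq_div_iff hden]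
  have hnat : n.choose (n - m) * (n - m - 1).factorial * (m.factorial * (n - m))
      = n.factorial := by
    rw [← h3, h4]; ring
  exact_mod_cast hnat

private lemma main_aux (n : ℕ) : ∀ m : ℕ, m ≤ n →
    ∑ k ∈ Finset.Icc 1 m, ((n - k).factorial : ℝ) / ((m - k).factorial * k) =
      ((n.factorial : ℝ) / m.factorial) *
        (∑ i ∈ Finset.Icc 1 n, (1 : ℝ) / i - ∑ i ∈ Finset.Icc 1 (n - m), (1 : ℝ) / i) := by
  intro m
  induction m with
  | zero => simp
  | succ m ih =>
    intro h
    have ihm := ih (by omega)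
    have hsplit : ∑ i ∈ Finset.Icc 1 (n - m), (1 : ℝ) / i
        = ∑ i ∈ Finset.Icc 1 (n - (m + 1)), (1 : ℝ) / i + 1 / ((n - m : ℕ) : ℝ) := by
      have e : n - m = (n - (m + 1)) + 1 := by omega
      rw [e, Finset.sum_Icc_succ_top (by omega), ← e]
    rw [hsplit] at ihm
    -- key recurrence: (m+1) * A(m+1) = A(m) + Bsum
    have key : ((m : ℝ) + 1) *
        (∑ k ∈ Finset.Icc 1 (m + 1), ((n - k).factorial : ℝ) / ((m + 1 - k).factorial * k))
        = (∑ k ∈ Finset.Icc 1 m, ((n - k).factorial : ℝ) / ((m - k).factorial * k))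
          + ∑ k ∈ Finset.Icc 1 (m + 1), ((n - k).factorial : ℝ) / (m + 1 - k).factorial := by
      rw [Finset.mul_sum, Finset.sum_Icc_succ_top (a := 1) (by omega),
        Finset.sum_Icc_succ_top (a := 1) (b := m) (by omega)
          (f := fun k => ((n - k).factorial : ℝ) / (m + 1 - k).factorial)]
      have hterm : ∀ k ∈ Finset.Icc 1 m,
          ((m : ℝ) + 1) * (((n - k).factorial : ℝ) / ((m + 1 - k).factorial * k))
            = ((n - k).factorial : ℝ) / ((m - k).factorial * k)
              + ((n - k).factorial : ℝ) / (m + 1 - k).factorial := by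
        intro k hk
        simp only [Finset.mem_Icc] at hk
        have e1 : m + 1 - k = (m - k) + 1 := by omega
        rw [e1, Nat.factorial_succ]
        have e2 : ((m - k : ℕ) : ℝ) = (m : ℝ) - k := by
          push_cast [hk.2]; ring
        have hk0 : ((k : ℕ) : ℝ) ≠ 0 := by
          have : 0 < k := hk.1
          positivity
        have hf : (((m - k : ℕ)).factorial : ℝ) ≠ 0 := by positivity
        have hmk : ((m - k : ℕ) : ℝ) + 1 ≠ 0 := by positivity
        push_cast
        rw [e2] at *
        field_simp
        ring
      rw [Finset.sum_congr rfl hterm, Finset.sum_add_distrib]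
      have htop : ((m : ℝ) + 1) *
          (((n - (m + 1)).factorial : ℝ) / (((m + 1 - (m + 1)).factorial : ℝ) * ((m + 1 : ℕ) : ℝ)))
          = ((n - (m + 1)).factorial : ℝ) / ((m + 1 - (m + 1)).factorial : ℝ) := by
        simp only [Nat.sub_self, Nat.factorial_zero, Nat.cast_one, one_mul]
        push_cast
        have : (m : ℝ) + 1 ≠ 0 := by positivity
        field_simp
      push_cast at htop ⊢
      rw [htop]
      ring
    rw [factorial_sum_aux m n h] at key
    have hm1 : ((m : ℝ) + 1) ≠ 0 := by positivity
    have heq : ∑ k ∈ Finset.Icc 1 (m + 1), ((n - k).factorial : ℝ) / ((m + 1 - k).factorial * k)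
        = ((∑ k ∈ Finset.Icc 1 m, ((n - k).factorial : ℝ) / ((m - k).factorial * k))
          + (n.factorial : ℝ) / (m.factorial * ((n - m : ℕ) : ℝ))) / ((m : ℝ) + 1) := by
      rw [eq_div_iff hm1]
      linarith [key]
    rw [heq, ihm]
    have hm0 : (m.factorial : ℝ) ≠ 0 := by positivity
    have hnm : ((n - m : ℕ) : ℝ) ≠ 0 := by
      have h5 : 0 < n - m := by omega
      have h6 : (0 : ℝ) < ((n - m : ℕ) : ℝ) := by exact_mod_cast h5
      positivity
    rw [Nat.factorial_succ]
    push_cast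
    field_simp
    ring

theorem sum_factorial_ratio_harmonic (m n : ℕ) (hm : 1 ≤ m) (hmn : m ≤ n) :
    ∑ k ∈ Finset.Icc 1 m, ((n - k).factorial : ℝ) / ((m - k).factorial * k) =
      ((n.factorial : ℝ) / m.factorial) *
        (∑ i ∈ Finset.Icc 1 n, (1 : ℝ) / i - ∑ i ∈ Finset.Icc 1 (n - m), (1 : ℝ) / i) := by
  exact main_aux n m hmn
end

section
/- For a nonnegative real number a and positive integer m, ∑_{k=1}^{m} ψ₀(k+a)/(k+a) = (1/2)·(ψ₁(a+m+1) − ψ₁(a+1) + ψ₀(a+m+1)² − ψ₀(a+1)²), where ψ₀ and ψ₁ are the digamma and trigamma functions. -/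
open Finset Real

/-- The digamma function ψ₀(x) = d/dx ln Γ(x). -/
noncomputable def digamma (x : ℝ) : ℝ := deriv (fun y => Real.log (Real.Gamma y)) x

/-- The trigamma function ψ₁(x) = d²/dx² ln Γ(x). -/
noncomputable def trigamma (x : ℝ) : ℝ := deriv digamma x

noncomputable def Gaux (y : ℝ) : ℝ := (Complex.log (Complex.Gamma (y : ℂ))).re

lemma Gaux_analyticAt {x : ℝ} (hx : 0 < x) : AnalyticAt ℝ Gaux x := by
  have hopen : IsOpen {s : ℂ | 0 < s.re} := isOpen_lt continuous_const Complex.continuous_re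
  have hmem : (x : ℂ) ∈ {s : ℂ | 0 < s.re} := by simpa using hx
  have hdiff : DifferentiableOn ℂ Complex.Gamma {s : ℂ | 0 < s.re} := by
    intro z hz
    refine (Complex.differentiableAt_Gamma z fun m => ?_).differentiableWithinAt
    intro h
    rw [h] at hz
    simp only [Set.mem_setOf_eq, Complex.neg_re, Complex.natCast_re] at hz
    have : (0:ℝ) ≤ (m:ℝ) := m.cast_nonneg
    linarith
  have hΓ : AnalyticAt ℂ Complex.Gamma (x : ℂ) :=
    hdiff.analyticAt (hopen.mem_nhds hmem)
  have hslit : Complex.Gamma (x : ℂ) ∈ Complex.slitPlane := by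
    rw [Complex.Gamma_ofReal]
    exact Complex.mem_slitPlane_iff.2 (Or.inl (by simpa using Real.Gamma_pos_of_pos hx))
  have hlog : AnalyticAt ℂ (fun z => Complex.log (Complex.Gamma z)) (x : ℂ) := hΓ.clog hslit
  have h1 : AnalyticAt ℝ (fun z => Complex.log (Complex.Gamma z)) (x : ℂ) :=
    hlog.restrictScalars
  have h2 : AnalyticAt ℝ (fun y : ℝ => (y : ℂ)) x := Complex.ofRealCLM.analyticAt x
  have h3 : AnalyticAt ℝ (fun y : ℝ => Complex.log (Complex.Gamma (y : ℂ))) x := h1.comp h2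
  exact (Complex.reCLM.analyticAt _).comp h3

lemma Gaux_eq {y : ℝ} (hy : 0 < y) : Gaux y = Real.log (Real.Gamma y) := by
  rw [Gaux, Complex.Gamma_ofReal, ← Complex.ofReal_log (Real.Gamma_pos_of_pos hy).le,
    Complex.ofReal_re]

lemma logGamma_eventuallyEq {x : ℝ} (hx : 0 < x) :
    (fun y => Real.log (Real.Gamma y)) =ᶠ[nhds x] Gaux := by
  filter_upwards [Ioi_mem_nhds hx] with y hy
  exact (Gaux_eq hy).symm

lemma digamma_eq_deriv_Gaux {x : ℝ} (hx : 0 < x) : digamma x = deriv Gaux x :=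
  (logGamma_eventuallyEq hx).deriv_eq

lemma digamma_eventuallyEq {x : ℝ} (hx : 0 < x) : digamma =ᶠ[nhds x] deriv Gaux := by
  filter_upwards [Ioi_mem_nhds hx] with y hy
  exact digamma_eq_deriv_Gaux hy

lemma deriv_Gaux_analyticAt {x : ℝ} (hx : 0 < x) : AnalyticAt ℝ (deriv Gaux) x := by
  have h : AnalyticOnNhd ℝ Gaux (Set.Ioi 0) := fun y hy => Gaux_analyticAt hy
  exact h.deriv x hx

lemma digamma_differentiableAt {x : ℝ} (hx : 0 < x) : DifferentiableAt ℝ digamma x :=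
  (deriv_Gaux_analyticAt hx).differentiableAt.congr_of_eventuallyEq (digamma_eventuallyEq hx)

lemma logGamma_differentiableAt {x : ℝ} (hx : 0 < x) :
    DifferentiableAt ℝ (fun y => Real.log (Real.Gamma y)) x := by
  refine (Real.differentiableAt_Gamma fun m => ?_).log (Real.Gamma_pos_of_pos hx).ne'
  intro h
  have : (0:ℝ) ≤ (m:ℝ) := m.cast_nonneg
  linarith [h ▸ hx]

lemma digamma_add_one {x : ℝ} (hx : 0 < x) : digamma (x + 1) = digamma x + 1 / x := by
  have h1 : digamma (x + 1) = deriv (fun y => Real.log (Real.Gamma (y + 1))) x := by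
    rw [digamma, ← deriv_comp_add_const]
  have hev : (fun y => Real.log (Real.Gamma (y + 1))) =ᶠ[nhds x]
      fun y => Real.log y + Real.log (Real.Gamma y) := by
    filter_upwards [Ioi_mem_nhds hx] with y hy
    rw [Real.Gamma_add_one (ne_of_gt hy), Real.log_mul (ne_of_gt hy)
      (Real.Gamma_pos_of_pos hy).ne']
  rw [h1, hev.deriv_eq, deriv_fun_add (Real.differentiableAt_log hx.ne') (logGamma_differentiableAt hx),
    Real.deriv_log, digamma]
  ring

lemma trigamma_add_one {x : ℝ} (hx : 0 < x) : trigamma (x + 1) = trigamma x - 1 / x ^ 2 := by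
  have h1 : trigamma (x + 1) = deriv (fun y => digamma (y + 1)) x := by
    rw [trigamma, ← deriv_comp_add_const]
  have hev : (fun y => digamma (y + 1)) =ᶠ[nhds x] fun y => digamma y + y⁻¹ := by
    filter_upwards [Ioi_mem_nhds hx] with y hy
    rw [digamma_add_one hy, one_div]
  rw [h1, hev.deriv_eq, deriv_fun_add (digamma_differentiableAt hx)
    (differentiableAt_inv hx.ne'), deriv_inv, trigamma]
  ring

lemma digamma_step {x : ℝ} (hx : 0 < x) :
    (1 / 2) * (trigamma (x + 1) - trigamma x + digamma (x + 1) ^ 2 - digamma x ^ 2)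
      = digamma x / x := by
  rw [trigamma_add_one hx, digamma_add_one hx]
  field_simp
  ring

theorem sum_digamma_div (a : ℝ) (ha : 0 ≤ a) (m : ℕ) (hm : 1 ≤ m) :
    ∑ k ∈ Finset.Icc 1 m, digamma (k + a) / (k + a) =
      (1 / 2) * (trigamma (a + m + 1) - trigamma (a + 1) +
        digamma (a + m + 1) ^ 2 - digamma (a + 1) ^ 2) := by
  induction m, hm using Nat.le_induction with
  | base =>
    have h := digamma_step (x := a + 1) (by linarith)
    simp only [Finset.Icc_self, Finset.sum_singleton, Nat.cast_one]
    rw [show (1:ℝ) + a = a + 1 by ring, show a + 1 + 1 = a + 1 + 1 from rfl]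
    linarith [h]
  | succ n hn ih =>
    have hpos : (0:ℝ) < a + n + 1 := by positivity
    have h := digamma_step (x := a + n + 1) hpos
    rw [Finset.sum_Icc_succ_top (by omega : 1 ≤ n + 1), ih]
    push_cast
    rw [show a + ((n:ℝ) + 1) + 1 = a + n + 1 + 1 by ring,
      show ((n:ℝ) + 1) + a = a + n + 1 by ring]
    linarith [h]
end

section
/- For integers 0 ≤ s, t and real q with q > −1, the integral ∫₀^∞ x^q e^{−x} L_s^{(a)}(x) L_t^{(b)}(x) dx equals (−1)^{s+t} ∑_{k=0}^{min(s,t)} C(q−a, s−k)·C(q−b, t−k)·Γ(q+1+k)/k!, where L_n^{(α)} denotes the generalized Laguerre polynomial and C(x, j) the generalized binomial coefficient x(x−1)⋯(x−j+1)/j!. -/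
open Finset Real MeasureTheory

/-- Generalized binomial coefficient C(x, j) = x(x−1)⋯(x−j+1)/j!. -/
noncomputable def genBinom (x : ℝ) (j : ℕ) : ℝ :=
  (∏ i ∈ Finset.range j, (x - i)) / j.factorial

/-- Generalized Laguerre polynomial L_n^{(α)}(x). -/
noncomputable def laguerre (n : ℕ) (α : ℝ) (x : ℝ) : ℝ :=
  ∑ i ∈ Finset.range (n + 1), (-1 : ℝ) ^ i * genBinom (α + n) (n - i) * x ^ i / i.factorial

lemma genBinom_zero (x : ℝ) : genBinom x 0 = 1 := by simp [genBinom]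

lemma genBinom_nat_self_lt {m k : ℕ} (h : m < k) : genBinom (m : ℝ) k = 0 := by
  unfold genBinom
  rw [Finset.prod_eq_zero (Finset.mem_range.mpr h) (by simp), zero_div]

/-- Pascal's rule for generalized binomial coefficients. -/
lemma genBinom_pascal (x : ℝ) (n : ℕ) :
    genBinom x (n + 1) = genBinom (x - 1) (n + 1) + genBinom (x - 1) n := by
  unfold genBinom
  rw [div_add_div _ _ (by positivity) (by positivity)]
  rw [div_eq_div_iff (by positivity) (by positivity)]
  push_cast [Nat.factorial_succ]
  rw [Finset.prod_range_succ (fun i => x - 1 - i), Finset.prod_range_succ' (fun i => x - i)]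
  have h1 : ∀ i ∈ Finset.range n, x - 1 - (i:ℝ) = x - ((i:ℝ) + 1) := by intros; ring
  rw [Finset.prod_congr rfl h1]
  push_cast
  ring

lemma genBinom_pascal' (x : ℝ) (n : ℕ) :
    genBinom (x + 1) (n + 1) = genBinom x (n + 1) + genBinom x n := by
  have := genBinom_pascal (x + 1) n
  simpa using this

lemma genBinom_nat_zero (i : ℕ) : genBinom (0 : ℝ) i = if i = 0 then 1 else 0 := by
  cases i with
  | zero => simp [genBinom]
  | succ n =>
    simp only [Nat.succ_ne_zero, if_false]
    have := genBinom_nat_self_lt (show 0 < n + 1 from Nat.succ_pos n)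
    simpa using this

/-- Vandermonde with natural second argument. -/
lemma vand_nat (m : ℕ) : ∀ (n : ℕ) (x : ℝ),
    ∑ i ∈ Finset.range (n + 1), genBinom x (n - i) * genBinom (m : ℝ) i
      = genBinom (x + m) n := by
  induction m with
  | zero =>
    intro n x
    rw [Finset.sum_eq_single 0]
    · simp [genBinom_zero]
    · intro i _ hi
      rw [show ((0:ℕ):ℝ) = (0:ℝ) by norm_num, genBinom_nat_zero, if_neg hi, mul_zero]
    · intro h; simp at h
  | succ m ih =>
    intro n x
    cases n with
    | zero => simp [genBinom_zero]
    | succ n =>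
      push_cast
      rw [show x + ((m:ℝ) + 1) = (x + m) + 1 by ring, genBinom_pascal' (x + m) n,
        ← ih (n+1) x, ← ih n x]
      rw [Finset.sum_range_succ' (fun i => genBinom x (n + 1 - i) * genBinom ((m:ℝ)+1) i),
        Finset.sum_range_succ' (fun i => genBinom x (n + 1 - i) * genBinom (m:ℝ) i)]
      simp only [Nat.sub_zero, genBinom_zero, mul_one, Nat.succ_sub_succ]
      have hp : ∀ k : ℕ, genBinom ((m:ℝ)+1) (k+1) = genBinom (m:ℝ) (k+1) + genBinom (m:ℝ) k :=
        fun k => genBinom_pascal' (m:ℝ) k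
      simp_rw [hp, mul_add, Finset.sum_add_distrib]
      ring

lemma genBinom_eq_desc (x : ℝ) (i : ℕ) :
    genBinom x i = (descPochhammer ℝ i).eval x / i.factorial := by
  unfold genBinom
  congr 1
  induction i with
  | zero => simp
  | succ n ih => rw [Finset.prod_range_succ, ih, descPochhammer_succ_eval]

/-- Full real Vandermonde identity. -/
lemma vand_real (n : ℕ) (x y : ℝ) :
    ∑ i ∈ Finset.range (n + 1), genBinom x (n - i) * genBinom y i
      = genBinom (x + y) n := by
  have key : (∑ i ∈ Finset.range (n + 1),
        Polynomial.C (genBinom x (n - i) / i.factorial) * descPochhammer ℝ i)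
      = Polynomial.C ((n.factorial : ℝ)⁻¹) *
        ((descPochhammer ℝ n).comp (Polynomial.C x + Polynomial.X)) := by
    apply Polynomial.eq_of_infinite_eval_eq
    apply Set.Infinite.mono (s := Set.range ((↑) : ℕ → ℝ))
    · rintro _ ⟨m, rfl⟩
      simp only [Set.mem_setOf_eq, Polynomial.eval_finset_sum, Polynomial.eval_mul,
        Polynomial.eval_C, Polynomial.eval_comp, Polynomial.eval_add, Polynomial.eval_X]
      have h := vand_nat m n x
      simp_rw [genBinom_eq_desc] at h
      rw [inv_mul_eq_div, ← h]
      apply Finset.sum_congr rfl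
      intro i _
      simp_rw [genBinom_eq_desc]
      ring
    · exact Set.infinite_range_of_injective Nat.cast_injective
  have h2 := congrArg (Polynomial.eval y) key
  simp only [Polynomial.eval_finset_sum, Polynomial.eval_mul, Polynomial.eval_C,
    Polynomial.eval_comp, Polynomial.eval_add, Polynomial.eval_X] at h2
  rw [genBinom_eq_desc (x + y), div_eq_inv_mul, ← h2]
  apply Finset.sum_congr rfl
  intro i _
  simp_rw [genBinom_eq_desc]
  ring

/-- Upper negation / reflection. -/
lemma genBinom_reflect (x : ℝ) (n : ℕ) :
    genBinom ((n : ℝ) - 1 - x) n = (-1 : ℝ) ^ n * genBinom x n := by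
  unfold genBinom
  rw [← mul_div_assoc]
  congr 1
  have h := Finset.prod_range_reflect (fun j : ℕ => ((j : ℝ) - x)) n
  calc ∏ i ∈ Finset.range n, ((n : ℝ) - 1 - x - i)
      = ∏ i ∈ Finset.range n, (((n - 1 - i : ℕ) : ℝ) - x) := by
        apply Finset.prod_congr rfl
        intro i hi
        rw [Finset.mem_range] at hi
        have h1 : (1:ℕ) + i ≤ n := by omega
        rw [Nat.cast_sub (by omega), Nat.cast_sub (by omega : 1 ≤ n)]
        push_cast; ring
    _ = ∏ j ∈ Finset.range n, ((j : ℝ) - x) := h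
    _ = (-1 : ℝ) ^ n * ∏ i ∈ Finset.range n, (x - i) := by
        rw [show ((-1:ℝ)^n) = ∏ _i ∈ Finset.range n, (-1:ℝ) by
          rw [Finset.prod_const, Finset.card_range], ← Finset.prod_mul_distrib]
        apply Finset.prod_congr rfl; intro i _; ring

lemma Gamma_rising (q : ℝ) (hq : -1 < q) (i : ℕ) :
    Real.Gamma (q + 1 + i) = Real.Gamma (q + 1) * ∏ l ∈ Finset.range i, (q + 1 + l) := by
  induction i with
  | zero => simp
  | succ i ih =>
    have hpos : (0:ℝ) < q + 1 + i := by
      have : (0:ℝ) ≤ (i:ℝ) := Nat.cast_nonneg i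
      linarith
    push_cast
    rw [show q + 1 + ((i:ℝ) + 1) = (q + 1 + i) + 1 by ring,
      Real.Gamma_add_one (ne_of_gt hpos), ih, Finset.prod_range_succ]
    ring

lemma genBinom_rising (q : ℝ) (i : ℕ) :
    genBinom (q + i) i = (∏ l ∈ Finset.range i, (q + 1 + l)) / i.factorial := by
  unfold genBinom
  congr 1
  have h := Finset.prod_range_reflect (fun l : ℕ => (q + 1 + l)) i
  rw [← h]
  apply Finset.prod_congr rfl
  intro l hl
  rw [Finset.mem_range] at hl
  rw [Nat.cast_sub (by omega), Nat.cast_sub (by omega : 1 ≤ i)]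
  push_cast; ring

/-- Closed form for the alternating sum (Schrödinger's single-Laguerre moment). -/
lemma sumA (s : ℕ) (a q : ℝ) (hq : -1 < q) :
    ∑ i ∈ Finset.range (s + 1),
        (-1 : ℝ) ^ i * genBinom (a + s) (s - i) * Real.Gamma (q + 1 + i) / i.factorial
      = (-1 : ℝ) ^ s * genBinom (q - a) s * Real.Gamma (q + 1) := by
  have step : ∀ i : ℕ, (-1 : ℝ) ^ i * genBinom (a + s) (s - i) * Real.Gamma (q + 1 + i) / i.factorial
      = Real.Gamma (q + 1) * (genBinom (a + s) (s - i) * genBinom (-q - 1) i) := by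
    intro i
    have h1 : genBinom (-q - 1) i = (-1 : ℝ) ^ i * genBinom (q + i) i := by
      have := genBinom_reflect (q + (i:ℝ)) i
      rw [show ((i:ℝ) - 1 - (q + i)) = -q - 1 by ring] at this
      exact this
    rw [h1, genBinom_rising, Gamma_rising q hq i]
    rw [div_eq_iff (by positivity : (i.factorial : ℝ) ≠ 0)]
    field_simp
  simp_rw [step, ← Finset.mul_sum, vand_real s (a + s) (-q - 1)]
  have h2 : a + (s:ℝ) + (-q - 1) = (s:ℝ) - 1 - (q - a) := by ring
  rw [h2, genBinom_reflect (q - a) s]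
  ring

lemma genBinom_nat_add (k m : ℕ) :
    genBinom ((k + m : ℕ) : ℝ) k = ((k + m).factorial : ℝ) / (k.factorial * m.factorial) := by
  rw [genBinom_eq_desc, descPochhammer_eval_eq_descFactorial,
    Nat.descFactorial_eq_factorial_mul_choose]
  have h := Nat.add_choose_mul_factorial_mul_factorial m k
  have hm : (m:ℕ) + k = k + m := Nat.add_comm m k
  rw [hm] at h
  field_simp
  push_cast [← h]
  ring

lemma final_sum (s t : ℕ) (a b q : ℝ) (hq : -1 < q) :
    ∑ j ∈ Finset.range (t + 1), ((-1:ℝ) ^ j * genBinom (b + t) (t - j) / j.factorial) *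
        ((-1:ℝ) ^ s * genBinom (q + j - a) s * Real.Gamma (q + j + 1))
      = (-1:ℝ) ^ (s + t) * ∑ k ∈ Finset.range (min s t + 1),
          genBinom (q - a) (s - k) * genBinom (q - b) (t - k)
            * Real.Gamma (q + 1 + k) / k.factorial := by
  have hvand : ∀ j : ℕ, genBinom (q + j - a) s
      = ∑ k ∈ Finset.range (s + 1), genBinom (q - a) (s - k) * genBinom (j : ℝ) k := by
    intro j
    rw [show q + (j:ℝ) - a = (q - a) + j by ring]
    exact (vand_nat j s (q - a)).symm
  -- inner sum
  set Inner : ℕ → ℝ := fun k => ∑ j ∈ Finset.range (t + 1),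
      ((-1:ℝ) ^ j * genBinom (b + t) (t - j) / j.factorial) *
        ((-1:ℝ) ^ s * genBinom (j : ℝ) k * Real.Gamma (q + j + 1)) with hInner
  have lhs_eq : ∑ j ∈ Finset.range (t + 1), ((-1:ℝ) ^ j * genBinom (b + t) (t - j) / j.factorial) *
        ((-1:ℝ) ^ s * genBinom (q + j - a) s * Real.Gamma (q + j + 1))
      = ∑ k ∈ Finset.range (s + 1), genBinom (q - a) (s - k) * Inner k := by
    simp only [hvand, Finset.mul_sum, Finset.sum_mul]
    rw [Finset.sum_comm]
    apply Finset.sum_congr rfl; intro k _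
    simp only [hInner, Finset.mul_sum]
    apply Finset.sum_congr rfl; intro j _
    ring
  have inner_zero : ∀ k, t < k → Inner k = 0 := by
    intro k hk
    simp only [hInner]
    apply Finset.sum_eq_zero
    intro j hj
    rw [Finset.mem_range] at hj
    rw [genBinom_nat_self_lt (by omega)]
    ring
  have inner_eq : ∀ k, k ≤ t → Inner k
      = (-1:ℝ) ^ (s + t) * genBinom (q - b) (t - k) * Real.Gamma (q + 1 + k) / k.factorial := by
    intro k hk
    have hqk : -1 < q + k := by
      have : (0:ℝ) ≤ (k:ℝ) := Nat.cast_nonneg k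
      linarith
    simp only [hInner]
    rw [show t + 1 = k + (t - k + 1) by omega, Finset.sum_range_add]
    rw [Finset.sum_eq_zero fun j hj => by
      rw [Finset.mem_range] at hj
      rw [genBinom_nat_self_lt (by omega)]
      ring]
    rw [zero_add]
    have hterm : ∀ m : ℕ, m < t - k + 1 →
        ((-1:ℝ) ^ (k + m) * genBinom (b + t) (t - (k + m)) / (k + m).factorial) *
          ((-1:ℝ) ^ s * genBinom ((k + m : ℕ) : ℝ) k * Real.Gamma (q + ((k + m : ℕ) : ℝ) + 1))
        = ((-1:ℝ) ^ (s + k) / k.factorial) *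
            ((-1:ℝ) ^ m * genBinom ((b + k) + (t - k : ℕ)) ((t - k) - m)
              * Real.Gamma ((q + k) + 1 + m) / m.factorial) := by
      intro m hm
      rw [genBinom_nat_add k m]
      have e1 : t - (k + m) = (t - k) - m := by omega
      have e2 : ((b:ℝ) + k) + ((t - k : ℕ):ℝ) = b + t := by
        rw [Nat.cast_sub hk]; ring
      have e3 : q + ((k + m : ℕ) : ℝ) + 1 = (q + k) + 1 + m := by push_cast; ring
      rw [e1, e2, e3]
      have hfac : ((k+m).factorial : ℝ) ≠ 0 := by positivity
      have hkfac : ((k).factorial : ℝ) ≠ 0 := by positivity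
      have hmfac : ((m).factorial : ℝ) ≠ 0 := by positivity
      rw [pow_add (-1:ℝ) k m, pow_add (-1:ℝ) s k]
      field_simp
    rw [Finset.sum_congr rfl fun m hm => hterm m (Finset.mem_range.mp hm)]
    rw [← Finset.mul_sum, sumA (t - k) (b + k) (q + k) hqk]
    have e4 : (q + k) - (b + k) = q - b := by ring
    have e5 : (-1:ℝ) ^ (s + k) * (-1:ℝ) ^ (t - k) = (-1:ℝ) ^ (s + t) := by
      rw [← pow_add, show s + k + (t - k) = s + t by omega]
    have e6 : (q + k) + 1 = q + 1 + k := by ring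
    rw [e4, e6]
    field_simp
    rw [← e5]
    ring
  rw [lhs_eq]
  rw [← Finset.sum_subset (Finset.range_subset_range.mpr (by omega : min s t + 1 ≤ s + 1))
    (fun k hks hk => by
      rw [Finset.mem_range, not_lt] at hk
      rw [Finset.mem_range] at hks
      rw [inner_zero k (by omega)]
      ring)]
  rw [Finset.mul_sum]
  apply Finset.sum_congr rfl
  intro k hk
  rw [Finset.mem_range] at hk
  rw [inner_eq k (by omega)]
  ring

lemma integrable_rpow_exp (r : ℝ) (hr : -1 < r) :
    IntegrableOn (fun x : ℝ => x ^ r * Real.exp (-x)) (Set.Ioi 0) := by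
  have h := Real.GammaIntegral_convergent (show (0:ℝ) < r + 1 by linarith)
  simp only [add_sub_cancel_right] at h
  exact h.congr_fun (fun x _ => mul_comm _ _) measurableSet_Ioi

lemma integral_rpow_exp (r : ℝ) (hr : -1 < r) :
    ∫ x in Set.Ioi (0:ℝ), x ^ r * Real.exp (-x) = Real.Gamma (r + 1) := by
  rw [Real.Gamma_eq_integral (show (0:ℝ) < r + 1 by linarith)]
  simp only [add_sub_cancel_right]
  exact setIntegral_congr_fun measurableSet_Ioi (fun x _ => mul_comm _ _)

lemma lag_expand (s : ℕ) (a q : ℝ) {x : ℝ} (hx : 0 < x) :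
    x ^ q * Real.exp (-x) * laguerre s a x
      = ∑ i ∈ Finset.range (s + 1),
          ((-1:ℝ) ^ i * genBinom (a + s) (s - i) / i.factorial) *
            (x ^ (q + i) * Real.exp (-x)) := by
  unfold laguerre
  rw [Finset.mul_sum]
  apply Finset.sum_congr rfl
  intro i _
  rw [Real.rpow_add hx, Real.rpow_natCast]
  ring

lemma integrableLag (s : ℕ) (a q : ℝ) (hq : -1 < q) :
    IntegrableOn (fun x : ℝ => x ^ q * Real.exp (-x) * laguerre s a x) (Set.Ioi 0) := by
  have hi : ∀ i : ℕ, -1 < q + i := fun i => by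
    have := Nat.cast_nonneg (α := ℝ) i; linarith
  apply IntegrableOn.congr_fun
    (f := fun x : ℝ => ∑ i ∈ Finset.range (s + 1),
      ((-1:ℝ) ^ i * genBinom (a + s) (s - i) / i.factorial) * (x ^ (q + i) * Real.exp (-x)))
  · exact integrable_finset_sum _ fun i _ => ((integrable_rpow_exp _ (hi i)).const_mul _)
  · intro x hx; exact (lag_expand s a q hx).symm
  · exact measurableSet_Ioi

lemma intLag_expand (s : ℕ) (a q : ℝ) (hq : -1 < q) :
    ∫ x in Set.Ioi (0:ℝ), x ^ q * Real.exp (-x) * laguerre s a x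
      = ∑ i ∈ Finset.range (s + 1),
          (-1:ℝ) ^ i * genBinom (a + s) (s - i) * Real.Gamma (q + 1 + i) / i.factorial := by
  have hi : ∀ i : ℕ, -1 < q + i := fun i => by
    have := Nat.cast_nonneg (α := ℝ) i; linarith
  rw [setIntegral_congr_fun measurableSet_Ioi (fun x hx => lag_expand s a q hx),
    integral_finset_sum _ fun i _ => ((integrable_rpow_exp _ (hi i)).const_mul _)]
  apply Finset.sum_congr rfl
  intro i _
  rw [MeasureTheory.integral_const_mul, integral_rpow_exp _ (hi i),
    show q + (i:ℝ) + 1 = q + 1 + i by ring]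
  ring

lemma intLag_closed (s : ℕ) (a q : ℝ) (hq : -1 < q) :
    ∫ x in Set.Ioi (0:ℝ), x ^ q * Real.exp (-x) * laguerre s a x
      = (-1:ℝ) ^ s * genBinom (q - a) s * Real.Gamma (q + 1) := by
  rw [intLag_expand s a q hq]
  exact sumA s a q hq

theorem schroedinger_integral (s t : ℕ) (a b q : ℝ) (hq : -1 < q) :
    ∫ x in Set.Ioi (0 : ℝ),
        x ^ q * Real.exp (-x) * laguerre s a x * laguerre t b x =
      (-1 : ℝ) ^ (s + t) * ∑ k ∈ Finset.range (min s t + 1),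
        genBinom (q - a) (s - k) * genBinom (q - b) (t - k)
          * Real.Gamma (q + 1 + k) / k.factorial := by
  have hj : ∀ j : ℕ, -1 < q + j := fun j => by
    have : (0:ℝ) ≤ (j:ℝ) := Nat.cast_nonneg j
    linarith
  have expand : ∀ x ∈ Set.Ioi (0:ℝ),
      x ^ q * Real.exp (-x) * laguerre s a x * laguerre t b x
        = ∑ j ∈ Finset.range (t + 1), ((-1:ℝ) ^ j * genBinom (b + t) (t - j) / j.factorial) *
            (x ^ (q + j) * Real.exp (-x) * laguerre s a x) := by
    intro x hx
    rw [Set.mem_Ioi] at hx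
    conv_lhs => rw [show laguerre t b x = ∑ j ∈ Finset.range (t + 1),
      (-1:ℝ) ^ j * genBinom (b + t) (t - j) * x ^ j / j.factorial from rfl]
    rw [Finset.mul_sum]
    apply Finset.sum_congr rfl; intro j _
    rw [Real.rpow_add hx, Real.rpow_natCast]
    ring
  rw [setIntegral_congr_fun measurableSet_Ioi expand,
    integral_finset_sum _ fun (j : ℕ) _ => ((integrableLag s a (q + (j:ℝ)) (hj j)).const_mul _)]
  simp_rw [MeasureTheory.integral_const_mul]
  rw [Finset.sum_congr rfl fun j _ => by rw [intLag_closed s a (q + j) (hj j)]]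
  exact final_sum s t a b q hq
end

section
/- For each integer m ≥ 2, the function g(x) = (1−x)·x·(ln(m−1) − ln(1−x) + ln x)² on the open interval (0,1) attains a maximum, and this maximum value is strictly positive. -/
open Real Filter Topology

lemma aux_tendsto (L : ℝ) :
    Tendsto (fun y => (1-y)*y*(L - Real.log (1-y) + Real.log y)^2) (𝓝[>](0:ℝ)) (𝓝 0) := by
  have t1 : Tendsto (fun y : ℝ => Real.log (1-y)) (𝓝[>](0:ℝ)) (𝓝 0) := by
    have : ContinuousAt (fun y : ℝ => Real.log (1-y)) 0 :=
      (Real.continuousAt_log (by norm_num)).comp (by fun_prop)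
    simpa using this.continuousWithinAt.tendsto
  have t2 : Tendsto (fun y : ℝ => y * Real.log y) (𝓝[>](0:ℝ)) (𝓝 0) := by
    have h := tendsto_log_mul_rpow_nhdsGT_zero (r := 1) zero_lt_one
    simp only [Real.rpow_one] at h
    simpa [mul_comm] using h
  have t3 : Tendsto (fun y : ℝ => y * (Real.log y)^2) (𝓝[>](0:ℝ)) (𝓝 0) := by
    have h := (tendsto_log_mul_rpow_nhdsGT_zero (r := (1:ℝ)/2) (by norm_num)).pow 2
    rw [show ((0:ℝ)^2 = 0) by norm_num] at h
    refine h.congr' ?_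
    filter_upwards [self_mem_nhdsWithin] with y (hy : 0 < y)
    rw [mul_pow, ← Real.rpow_natCast (y ^ ((1:ℝ)/2)) 2, ← Real.rpow_mul hy.le]
    norm_num; ring
  have t0 : Tendsto (fun y : ℝ => y) (𝓝[>](0:ℝ)) (𝓝 0) := by
    exact tendsto_id.mono_left (nhdsWithin_le_nhds)
  have key : Tendsto (fun y : ℝ =>
      (1-y) * ((L - Real.log (1-y))^2 * y + (2*(L - Real.log (1-y))) * (y * Real.log y)
        + y * (Real.log y)^2)) (𝓝[>](0:ℝ)) (𝓝 0) := by
    have := ((tendsto_const_nhds (x := (1:ℝ)).sub t0).mul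
      ((((tendsto_const_nhds (x := L)).sub t1).pow 2).mul t0 |>.add
        (((tendsto_const_nhds (x := (2:ℝ)*L)).sub (t1.const_mul 2)).mul t2) |>.add t3))
    simpa [mul_sub] using this
  refine key.congr (fun y => ?_)
  ring

theorem capacity_max_exists (m : ℕ) (hm : 2 ≤ m) :
    ∃ x ∈ Set.Ioo (0 : ℝ) 1,
      (∀ y ∈ Set.Ioo (0 : ℝ) 1,
        (1 - y) * y * (Real.log (m - 1) - Real.log (1 - y) + Real.log y) ^ 2 ≤
          (1 - x) * x * (Real.log (m - 1) - Real.log (1 - x) + Real.log x) ^ 2) ∧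
      0 < (1 - x) * x * (Real.log (m - 1) - Real.log (1 - x) + Real.log x) ^ 2 := by
  set L : ℝ := Real.log ((m:ℝ) - 1) with hL
  set g : ℝ → ℝ := fun y => (1 - y) * y * (L - Real.log (1 - y) + Real.log y) ^ 2 with hg
  -- continuity on Ioo 0 1
  have gcont : ∀ y ∈ Set.Ioo (0:ℝ) 1, ContinuousAt g y := by
    intro y hy
    have h1 : (1:ℝ) - y ≠ 0 := by have := hy.2; linarith
    have h2 : y ≠ 0 := ne_of_gt hy.1
    exact (continuousAt_const.sub continuousAt_id).mul continuousAt_id |>.mul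
      ((continuousAt_const.sub ((Real.continuousAt_log h1).comp
        (continuousAt_const.sub continuousAt_id))).add (Real.continuousAt_log h2) |>.pow 2)
  -- positivity at 1/2 or 1/3
  obtain ⟨x₀, hx₀, hx₀pos⟩ : ∃ x₀ ∈ Set.Ioo (0:ℝ) 1, 0 < g x₀ := by
    by_cases hL0 : L = 0
    · refine ⟨1/3, by norm_num, ?_⟩
      have hne0 : Real.log (1 - 1/3 : ℝ) ≠ Real.log (1/3 : ℝ) := by
        intro h
        have := Real.log_injOn_pos (by norm_num) (by norm_num) h
        norm_num at this
      have hne : L - Real.log (1 - 1/3 : ℝ) + Real.log (1/3 : ℝ) ≠ 0 := by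
        rw [hL0]; intro h; apply hne0; linarith
      have hsq : (0:ℝ) < (L - Real.log (1 - 1/3 : ℝ) + Real.log (1/3 : ℝ)) ^ 2 :=
        pow_two_pos_of_ne_zero hne
      have : g (1/3) = (1 - 1/3) * (1/3) * (L - Real.log (1 - 1/3 : ℝ) + Real.log (1/3 : ℝ)) ^ 2 := rfl
      rw [this]
      have h13 : (0:ℝ) < (1 - 1/3) * (1/3 : ℝ) := by norm_num
      positivity
    · refine ⟨1/2, by norm_num, ?_⟩
      have heq : (1 : ℝ) - 1/2 = 1/2 := by norm_num
      have hgv : g (1/2) = (1/2) * (1/2) * L ^ 2 := by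
        simp only [hg, heq]; ring
      rw [hgv]
      positivity
  -- tendsto at endpoints
  have tend0 : Tendsto g (𝓝[>](0:ℝ)) (𝓝 0) := aux_tendsto L
  have tend1 : Tendsto g (𝓝[<](1:ℝ)) (𝓝 0) := by
    have hmap : Tendsto (fun y : ℝ => 1 - y) (𝓝[<](1:ℝ)) (𝓝[>](0:ℝ)) := by
      have hc : Tendsto (fun y : ℝ => 1 - y) (𝓝 (1:ℝ)) (𝓝 0) := by
        have h := ((continuous_const (y := (1:ℝ))).sub continuous_id).tendsto (1:ℝ)
        simpa [Pi.sub_def] using h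
      refine tendsto_nhdsWithin_of_tendsto_nhds_of_eventually_within _
        (hc.mono_left nhdsWithin_le_nhds) ?_
      filter_upwards [self_mem_nhdsWithin] with y (hy : y < 1)
      simpa using hy
    have := (aux_tendsto (-L)).comp hmap
    refine this.congr (fun y => ?_)
    simp only [Function.comp]
    have : (1 : ℝ) - (1 - y) = y := by ring
    rw [this]
    ring
  -- find cutoffs
  have hcpos := hx₀pos
  obtain ⟨a, ha, hA⟩ : ∃ a, 0 < a ∧ ∀ y ∈ Set.Ioo (0:ℝ) a, g y < g x₀ := by
    have := tend0.eventually (eventually_lt_nhds hcpos)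
    rw [eventually_nhdsWithin_iff, Metric.eventually_nhds_iff] at this
    obtain ⟨ε, hε, hball⟩ := this
    refine ⟨ε, hε, fun y hy => hball (by
      simpa [Real.dist_eq, abs_of_pos hy.1] using hy.2) hy.1⟩
  obtain ⟨b, hb, hB⟩ : ∃ b, b < 1 ∧ ∀ y ∈ Set.Ioo b (1:ℝ), g y < g x₀ := by
    have := tend1.eventually (eventually_lt_nhds hcpos)
    rw [eventually_nhdsWithin_iff, Metric.eventually_nhds_iff] at this
    obtain ⟨ε, hε, hball⟩ := this
    refine ⟨max (1 - ε) (1/2), by rcases le_max_iff.mp (le_refl (max (1-ε) (1/2:ℝ))) with h|h <;> [skip;skip] <;> exact max_lt (by linarith) (by norm_num), fun y hy => ?_⟩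
    obtain ⟨hy1, hy2⟩ := hy
    have h1 : 1 - ε < y := lt_of_le_of_lt (le_max_left _ _) hy1
    exact hball (by rw [Real.dist_eq, abs_of_neg (by linarith : y - 1 < 0)]; linarith) hy2
  -- compact interval
  set l : ℝ := min (a/2) x₀ with hl
  set r : ℝ := max ((b+1)/2) x₀ with hr
  have hl0 : 0 < l := lt_min (by linarith) hx₀.1
  have hr1 : r < 1 := max_lt (by linarith) hx₀.2
  have hlr : l ≤ r := le_trans (min_le_right _ _) (le_max_right _ _)
  have hsub : Set.Icc l r ⊆ Set.Ioo (0:ℝ) 1 := fun y hy =>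
    ⟨lt_of_lt_of_le hl0 hy.1, lt_of_le_of_lt hy.2 hr1⟩
  have hK : IsCompact (Set.Icc l r) := isCompact_Icc
  have hgc : ContinuousOn g (Set.Icc l r) := fun y hy =>
    (gcont y (hsub hy)).continuousWithinAt
  obtain ⟨x, hxK, hxmax⟩ := hK.exists_isMaxOn (Set.nonempty_Icc.mpr hlr) hgc
  have hx₀K : x₀ ∈ Set.Icc l r := ⟨min_le_right _ _, le_max_right _ _⟩
  have hge : g x₀ ≤ g x := hxmax hx₀K
  refine ⟨x, hsub hxK, fun y hy => ?_, lt_of_lt_of_le hx₀pos hge⟩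
  by_cases hyK : y ∈ Set.Icc l r
  · exact hxmax hyK
  · rcases not_and_or.mp (fun h => hyK ⟨h.1, h.2⟩) with h | h
    · push_neg at h
      have hya : y < a := lt_of_lt_of_le (lt_of_lt_of_le h (min_le_left _ _)) (by linarith)
      exact le_of_lt (lt_of_lt_of_le (hA y ⟨hy.1, hya⟩) hge)
    · push_neg at h
      have hm2 : (b+1)/2 ≤ r := le_max_left _ _
      have hyb : b < y := by linarith
      exact le_of_lt (lt_of_lt_of_le (hB y ⟨hyb, hy.2⟩) hge)
end
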